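/- (Conical Alexander trick.) Let V be an arbitrary subset of the unit sphere S³ in ℝ⁴. The restriction-to-the-boundary map ∂ : Homeo_V(D⁴) → Homeo_V(S³), sending ψ to ψ|_{S³}, is a homotopy equivalence of topological spaces: there is a continuous map s : Homeo_V(S³) → Homeo_V(D⁴) with ∂ ∘ s equal to the identity and s ∘ ∂ homotopic to the identity of Homeo_V(D⁴). -/

import Mathlib

open Metric

noncomputable section

/-- Euclidean 4-space. -/
abbrev E4 : Type := EuclideanSpace ℝ (Fin 4)

/-- The closed unit ball `D⁴ ⊆ ℝ⁴`. -/
abbrev D4 : Set E4 := Metric.closedBall (0 : E4) 1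

/-- The unit sphere `S³ ⊆ ℝ⁴`, the boundary of `D⁴`. -/
abbrev S3 : Set E4 := Metric.sphere (0 : E4) 1

/-- The compact-open topology on self-homeomorphisms of a space, induced from the
compact-open topology on continuous self-maps. -/
instance homeoSelfTopology (α : Type*) [TopologicalSpace α] : TopologicalSpace (α ≃ₜ α) :=
  TopologicalSpace.induced (fun φ => (⟨φ, φ.continuous⟩ : C(α, α))) inferInstance

/-- `Homeo_V(S³)`: self-homeomorphisms of the sphere `S³` fixing `V` pointwise,
topologised as a subspace of the space of continuous self-maps (compact-open topology). -/
def HomeoVS (V : Set E4) : Type :=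
  {φ : S3 ≃ₜ S3 // ∀ v : S3, (v : E4) ∈ V → φ v = v}

/-- `Homeo_V(D⁴)`: self-homeomorphisms of the ball `D⁴` fixing `V` pointwise and mapping the
boundary sphere `S³` onto itself, topologised as a subspace of the space of continuous
self-maps (compact-open topology). -/
def HomeoVD (V : Set E4) : Type :=
  {ψ : D4 ≃ₜ D4 // (∀ v : D4, (v : E4) ∈ V → ψ v = v) ∧
    (fun x => ψ x) '' {x : D4 | (x : E4) ∈ S3} = {x : D4 | (x : E4) ∈ S3}}

instance (V : Set E4) : TopologicalSpace (HomeoVS V) :=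
  instTopologicalSpaceSubtype

instance (V : Set E4) : TopologicalSpace (HomeoVD V) :=
  instTopologicalSpaceSubtype

namespace HomeoRestriction

variable {ψ : D4 ≃ₜ D4}

lemma mem_sphere_image
    (h : (fun x => ψ x) '' {x : D4 | (x : E4) ∈ S3} = {x : D4 | (x : E4) ∈ S3})
    {x : D4} (hx : (x : E4) ∈ S3) : ((ψ x : D4) : E4) ∈ S3 := by
  have : ψ x ∈ {x : D4 | (x : E4) ∈ S3} := by
    rw [← h]; exact Set.mem_image_of_mem _ hx
  exact this

lemma mem_sphere_symm
    (h : (fun x => ψ x) '' {x : D4 | (x : E4) ∈ S3} = {x : D4 | (x : E4) ∈ S3})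
    {y : D4} (hy : (y : E4) ∈ S3) : ((ψ.symm y : D4) : E4) ∈ S3 := by
  have : y ∈ (fun x => ψ x) '' {x : D4 | (x : E4) ∈ S3} := by rw [h]; exact hy
  obtain ⟨x, hx, hxy⟩ := this
  have hs : ψ.symm y = x := by rw [← hxy]; exact ψ.symm_apply_apply x
  rw [hs]; exact hx

/-- The restriction of a boundary-sphere-preserving self-homeomorphism of `D⁴` to a
self-homeomorphism of `S³`. -/
def restrictHomeo (ψ : D4 ≃ₜ D4)
    (h : (fun x => ψ x) '' {x : D4 | (x : E4) ∈ S3} = {x : D4 | (x : E4) ∈ S3}) :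
    S3 ≃ₜ S3 where
  toFun a := ⟨((ψ ⟨(a : E4), Metric.sphere_subset_closedBall a.2⟩ : D4) : E4),
    mem_sphere_image h a.2⟩
  invFun a := ⟨((ψ.symm ⟨(a : E4), Metric.sphere_subset_closedBall a.2⟩ : D4) : E4),
    mem_sphere_symm h a.2⟩
  left_inv a := by
    apply Subtype.ext
    have : (⟨((ψ ⟨(a : E4), Metric.sphere_subset_closedBall a.2⟩ : D4) : E4),
        Metric.sphere_subset_closedBall (mem_sphere_image h a.2)⟩ : D4)
        = ψ ⟨(a : E4), Metric.sphere_subset_closedBall a.2⟩ := by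
      apply Subtype.ext; rfl
    simp only [this, Homeomorph.symm_apply_apply]
  right_inv a := by
    apply Subtype.ext
    have : (⟨((ψ.symm ⟨(a : E4), Metric.sphere_subset_closedBall a.2⟩ : D4) : E4),
        Metric.sphere_subset_closedBall (mem_sphere_symm h a.2)⟩ : D4)
        = ψ.symm ⟨(a : E4), Metric.sphere_subset_closedBall a.2⟩ := by
      apply Subtype.ext; rfl
    simp only [this, Homeomorph.apply_symm_apply]
  continuous_toFun := by
    apply Continuous.subtype_mk
    exact continuous_subtype_val.comp (ψ.continuous.comp
      (Continuous.subtype_mk continuous_subtype_val _))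
  continuous_invFun := by
    apply Continuous.subtype_mk
    exact continuous_subtype_val.comp (ψ.symm.continuous.comp
      (Continuous.subtype_mk continuous_subtype_val _))

end HomeoRestriction

/-- The boundary restriction map `∂ : Homeo_V(D⁴) → Homeo_V(S³)`. -/
def bres (V : Set E4) (Ψ : HomeoVD V) : HomeoVS V :=
  ⟨HomeoRestriction.restrictHomeo Ψ.1 Ψ.2.2, by
    intro v hv
    apply Subtype.ext
    show ((Ψ.1 ⟨(v : E4), Metric.sphere_subset_closedBall v.2⟩ : D4) : E4) = (v : E4)
    have := Ψ.2.1 ⟨(v : E4), Metric.sphere_subset_closedBall v.2⟩ hv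
    rw [this]⟩


/-!
The section sends `φ ∈ Homeo_V(S³)` to its cone `x ↦ ‖x‖ • φ (x / ‖x‖)`. The homotopy is the
Alexander isotopy: for `t ∈ [0, 1]` and `r = max t ‖x‖`, put `H t ψ x = r • ψ (x / r)`. On the
ball of radius `t` this is `ψ` conjugated by the dilation by `t`, outside it it is the cone on
`ψ|S³`; so it agrees with `ψ` on `S³`, has inverse `H t ψ⁻¹`, equals `ψ` at `t = 1` and the cone
on `∂ψ` at `t = 0`. Joint continuity in `(t, ψ, x)` is clear where `r ≠ 0`, and at `r = 0` it
follows from `‖H t ψ x‖ ≤ r`.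
-/
open Set Function unitInterval Topology

section HomeomorphTopology

variable {X α : Type*} [TopologicalSpace X] [TopologicalSpace α]

theorem continuous_homeomorph_of_continuous_uncurry {F : X → α ≃ₜ α}
    (h : Continuous fun p : X × α => F p.1 p.2) : Continuous F :=
  continuous_induced_rng.2 (ContinuousMap.continuous_of_continuous_uncurry _ h)

theorem continuous_homeomorph_eval [LocallyCompactSpace α] :
    Continuous fun p : (α ≃ₜ α) × α => p.1 p.2 := by
  have h : Continuous fun φ : α ≃ₜ α => (⟨φ, φ.continuous⟩ : C(α, α)) := continuous_induced_dom
  have : Continuous fun p : (α ≃ₜ α) × α => ((⟨p.1, p.1.continuous⟩ : C(α, α)), p.2) :=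
    (h.comp continuous_fst).prodMk continuous_snd
  exact (continuous_eval (F := C(α, α))).comp this

end HomeomorphTopology

theorem continuous_of_norm_le_of_continuousAt {X F : Type*} [TopologicalSpace X]
    [NormedAddCommGroup F] {f : X → F} {ρ : X → ℝ} (hρ : Continuous ρ)
    (hfρ : ∀ p, ‖f p‖ ≤ ρ p) (hf : ∀ p, ρ p ≠ 0 → ContinuousAt f p) : Continuous f := by
  refine continuous_iff_continuousAt.2 fun p => ?_
  by_cases hp : ρ p = 0
  · have hfp : f p = 0 := norm_le_zero_iff.1 (hp ▸ hfρ p)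
    rw [ContinuousAt, hfp]
    exact squeeze_zero_norm hfρ (hp ▸ hρ.tendsto p)
  · exact hf p hp

namespace AlexanderTrick

variable {E : Type*} [NormedAddCommGroup E]

local notation "𝔹" => closedBall (0 : E) 1
local notation "𝕊" => sphere (0 : E) 1
local notation "∂𝔹" => ((↑) ⁻¹' 𝕊 : Set 𝔹)

def radius (t : I) (x : 𝔹) : ℝ := max (t : ℝ) ‖(x : E)‖

lemma norm_le_radius (t : I) (x : 𝔹) : ‖(x : E)‖ ≤ radius t x := le_max_right _ _

lemma radius_nonneg (t : I) (x : 𝔹) : 0 ≤ radius t x := (norm_nonneg _).trans (norm_le_radius t x)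

lemma radius_le_one (t : I) (x : 𝔹) : radius t x ≤ 1 :=
  max_le t.2.2 (mem_closedBall_zero_iff.1 x.2)

lemma radius_eq_one_of_mem_sphere (t : I) {x : 𝔹} (hx : (x : E) ∈ 𝕊) : radius t x = 1 := by
  rw [radius, mem_sphere_zero_iff_norm.1 hx]
  exact max_eq_right t.2.2

lemma radius_zero (x : 𝔹) : radius 0 x = ‖(x : E)‖ := max_eq_right (norm_nonneg _)

lemma radius_one (x : 𝔹) : radius 1 x = 1 := max_eq_left (mem_closedBall_zero_iff.1 x.2)

lemma continuous_radius : Continuous fun q : I × 𝔹 => radius q.1 q.2 :=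
  (continuous_subtype_val.comp continuous_fst).max
    (continuous_subtype_val.comp continuous_snd).norm

lemma eq_zero_of_radius_eq_zero {t : I} {x : 𝔹} (h : radius t x = 0) : (x : E) = 0 :=
  norm_le_zero_iff.1 (h ▸ norm_le_radius t x)

open scoped Classical in
def sphereExtend (g : 𝕊 → 𝕊) (y : 𝔹) : 𝔹 :=
  if hy : (y : E) ∈ 𝕊 then ⟨g ⟨y, hy⟩, sphere_subset_closedBall (g ⟨y, hy⟩).2⟩ else y

lemma sphereExtend_of_mem (g : 𝕊 → 𝕊) {y : 𝔹} (hy : (y : E) ∈ 𝕊) :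
    (sphereExtend g y : E) = g ⟨y, hy⟩ := by
  rw [sphereExtend, dif_pos hy]

lemma sphereExtend_of_notMem (g : 𝕊 → 𝕊) {y : 𝔹} (hy : (y : E) ∉ 𝕊) : sphereExtend g y = y :=
  dif_neg hy

lemma mapsTo_sphereExtend (g : 𝕊 → 𝕊) : MapsTo (sphereExtend g) ∂𝔹 ∂𝔹 := fun y hy => by
  rw [mem_preimage, sphereExtend_of_mem g hy]
  exact (g _).2

lemma leftInverse_sphereExtend {g h : 𝕊 → 𝕊} (hgh : LeftInverse h g) :
    LeftInverse (sphereExtend h) (sphereExtend g) := fun y => by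
  by_cases hy : (y : E) ∈ 𝕊
  · have hgy : sphereExtend g y ∈ ∂𝔹 := mapsTo_sphereExtend g hy
    ext
    rw [sphereExtend_of_mem h hgy,
      show (⟨_, hgy⟩ : 𝕊) = g ⟨y, hy⟩ from Subtype.ext (sphereExtend_of_mem g hy), hgh]
  · rw [sphereExtend_of_notMem g hy, sphereExtend_of_notMem h hy]

lemma continuousOn_sphereExtend [ProperSpace E] :
    ContinuousOn (fun q : (𝕊 ≃ₜ 𝕊) × 𝔹 => sphereExtend q.1 q.2)
      (univ ×ˢ ∂𝔹 : Set ((𝕊 ≃ₜ 𝕊) × 𝔹)) := by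
  rw [continuousOn_iff_continuous_domRestrict]
  have hval : Continuous fun q : ↥(univ ×ˢ ∂𝔹 : Set ((𝕊 ≃ₜ 𝕊) × 𝔹)) => (q.1.1 ⟨q.1.2, q.2.2⟩ : 𝕊) :=
    continuous_homeomorph_eval.comp ((continuous_fst.comp continuous_subtype_val).prodMk
      ((continuous_subtype_val.comp (continuous_snd.comp continuous_subtype_val)).subtype_mk _))
  exact ((continuous_inclusion sphere_subset_closedBall).comp hval).congr
    fun q => (Subtype.ext (sphereExtend_of_mem _ q.2.2)).symm

variable [NormedSpace ℝ E]

def shrink (t : I) (x : 𝔹) : 𝔹 :=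
  ⟨(radius t x)⁻¹ • (x : E), by
    rcases (radius_nonneg t x).eq_or_lt with h | h
    · simp [← h]
    · rw [mem_closedBall_zero_iff, norm_smul, norm_inv, Real.norm_of_nonneg h.le,
        inv_mul_le_one₀ h]
      exact norm_le_radius t x⟩

lemma radius_smul_shrink (t : I) (x : 𝔹) : radius t x • (shrink t x : E) = x := by
  by_cases h : radius t x = 0
  · simp [h, eq_zero_of_radius_eq_zero h]
  · exact smul_inv_smul₀ h _

lemma shrink_mem_sphere {t : I} {x : 𝔹} (h : (t : ℝ) < ‖(x : E)‖) : (shrink t x : E) ∈ 𝕊 := by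
  have : radius t x = ‖(x : E)‖ := max_eq_right h.le
  rw [mem_sphere_zero_iff_norm, shrink, Subtype.coe_mk, this, norm_smul, norm_inv, norm_norm,
    inv_mul_cancel₀ (t.2.1.trans_lt h).ne']

lemma continuousAt_shrink {t : I} {x : 𝔹} (h : radius t x ≠ 0) :
    ContinuousAt (fun q : I × 𝔹 => shrink q.1 q.2) (t, x) :=
  IsInducing.subtypeVal.continuousAt_iff.2 <|
    (continuous_radius.continuousAt.inv₀ h).smul
      (continuous_subtype_val.comp continuous_snd).continuousAt

def isotopy (t : I) (f : 𝔹 → 𝔹) (x : 𝔹) : 𝔹 :=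
  ⟨radius t x • (f (shrink t x) : E), by
    rw [mem_closedBall_zero_iff, norm_smul, Real.norm_of_nonneg (radius_nonneg t x)]
    exact mul_le_one₀ (radius_le_one t x) (norm_nonneg _) (mem_closedBall_zero_iff.1 (f _).2)⟩

lemma coe_isotopy (t : I) (f : 𝔹 → 𝔹) (x : 𝔹) :
    (isotopy t f x : E) = radius t x • (f (shrink t x) : E) := rfl

lemma isotopy_of_radius_eq_one {t : I} (f : 𝔹 → 𝔹) {x : 𝔹} (h : radius t x = 1) :
    isotopy t f x = f x := by
  have : shrink t x = x := Subtype.ext <| by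
    change (radius t x)⁻¹ • (x : E) = x
    rw [h, inv_one, one_smul]
  exact Subtype.ext <| by rw [coe_isotopy, this, h, one_smul]

lemma isotopy_of_mem_sphere (t : I) (f : 𝔹 → 𝔹) {x : 𝔹} (hx : (x : E) ∈ 𝕊) :
    isotopy t f x = f x :=
  isotopy_of_radius_eq_one f (radius_eq_one_of_mem_sphere t hx)

lemma isotopy_one (f : 𝔹 → 𝔹) : isotopy 1 f = f :=
  funext fun x => isotopy_of_radius_eq_one f (radius_one x)

lemma isotopy_zero_congr {f g : 𝔹 → 𝔹} (h : EqOn f g ∂𝔹) : isotopy 0 f = isotopy 0 g := by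
  funext x
  by_cases hx : (x : E) = 0
  · ext; simp [coe_isotopy, radius_zero, hx]
  · ext; rw [coe_isotopy, coe_isotopy, h (shrink_mem_sphere (norm_pos_iff.2 hx))]

lemma radius_isotopy {t : I} {f : 𝔹 → 𝔹} (hf : MapsTo f ∂𝔹 ∂𝔹) (x : 𝔹) :
    radius t (isotopy t f x) = radius t x := by
  have hn : ‖(isotopy t f x : E)‖ = radius t x * ‖(f (shrink t x) : E)‖ := by
    rw [coe_isotopy, norm_smul, Real.norm_of_nonneg (radius_nonneg t x)]
  rcases le_or_gt ‖(x : E)‖ t with hle | hlt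
  · have hr : radius t x = t := max_eq_left hle
    rw [radius, hn, hr]
    exact max_eq_left (mul_le_of_le_one_right t.2.1 (mem_closedBall_zero_iff.1 (f _).2))
  · rw [radius, hn, mem_sphere_zero_iff_norm.1 (hf (shrink_mem_sphere hlt)), mul_one]
    exact max_eq_right (hlt.le.trans (norm_le_radius t x))

lemma shrink_isotopy {t : I} {f : 𝔹 → 𝔹} (hf : MapsTo f ∂𝔹 ∂𝔹) {x : 𝔹} (h : radius t x ≠ 0) :
    shrink t (isotopy t f x) = f (shrink t x) :=
  Subtype.ext <| by
    rw [shrink, Subtype.coe_mk, radius_isotopy hf, coe_isotopy, inv_smul_smul₀ h]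

lemma leftInverse_isotopy {t : I} {f g : 𝔹 → 𝔹} (hf : MapsTo f ∂𝔹 ∂𝔹) (hgf : LeftInverse g f) :
    LeftInverse (isotopy t g) (isotopy t f) := by
  intro x
  ext
  by_cases h : radius t x = 0
  · rw [coe_isotopy, radius_isotopy hf, h, zero_smul, eq_zero_of_radius_eq_zero h]
  · rw [coe_isotopy, radius_isotopy hf, shrink_isotopy hf h, hgf, radius_smul_shrink]

theorem continuous_isotopy_of_continuousAt {X : Type*} [TopologicalSpace X] {τ : X → I}
    {F : X → 𝔹 → 𝔹} (hτ : Continuous τ)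
    (hF : ∀ p x, radius (τ p) x ≠ 0 →
      ContinuousAt (fun q : X × 𝔹 => F q.1 (shrink (τ q.1) q.2)) (p, x)) :
    Continuous fun q : X × 𝔹 => isotopy (τ q.1) (F q.1) q.2 := by
  have hρ : Continuous fun q : X × 𝔹 => radius (τ q.1) q.2 :=
    continuous_radius.comp ((hτ.comp continuous_fst).prodMk continuous_snd)
  refine continuous_induced_rng.2
    (continuous_of_norm_le_of_continuousAt hρ (fun q => ?_) fun q hq => ?_)
  · rw [Function.comp_apply, coe_isotopy, norm_smul, Real.norm_of_nonneg (radius_nonneg _ _)]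
    exact mul_le_of_le_one_right (radius_nonneg _ _) (mem_closedBall_zero_iff.1 (F _ _).2)
  · exact hρ.continuousAt.smul (continuous_subtype_val.continuousAt.comp (hF q.1 q.2 hq))

/-- `isotopy 0` evaluates its argument only on the sphere, and at `0` where the result is scaled
by `0`, so this is `x ↦ ‖x‖ • g (x / ‖x‖)` whatever `sphereExtend` does inside the ball. -/
def cone (g : 𝕊 → 𝕊) : 𝔹 → 𝔹 := isotopy 0 (sphereExtend g)

lemma cone_of_mem_sphere (g : 𝕊 → 𝕊) {x : 𝔹} (hx : (x : E) ∈ 𝕊) :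
    (cone g x : E) = g ⟨x, hx⟩ := by
  rw [cone, isotopy_of_mem_sphere 0 _ hx, sphereExtend_of_mem g hx]

lemma mapsTo_cone (g : 𝕊 → 𝕊) : MapsTo (cone g) ∂𝔹 ∂𝔹 := fun x hx => by
  rw [mem_preimage, cone_of_mem_sphere g hx]
  exact (g _).2

lemma isotopy_zero_eq_cone {f : 𝔹 → 𝔹} {g : 𝕊 → 𝕊}
    (h : ∀ (x : 𝔹) (hx : (x : E) ∈ 𝕊), (f x : E) = g ⟨x, hx⟩) : isotopy 0 f = cone g :=
  isotopy_zero_congr fun x hx => Subtype.ext <| by rw [h x hx, sphereExtend_of_mem g hx]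

lemma leftInverse_cone {g h : 𝕊 → 𝕊} (hgh : LeftInverse h g) : LeftInverse (cone h) (cone g) :=
  leftInverse_isotopy (mapsTo_sphereExtend g) (leftInverse_sphereExtend hgh)

variable [ProperSpace E]

theorem continuous_isotopy :
    Continuous fun q : (I × (𝔹 ≃ₜ 𝔹)) × 𝔹 => isotopy q.1.1 q.1.2 q.2 :=
  continuous_isotopy_of_continuousAt (F := fun p : I × (𝔹 ≃ₜ 𝔹) => p.2) continuous_fst
    fun _ _ hr => continuous_homeomorph_eval.continuousAt.comp <|
      continuous_fst.snd.continuousAt.prodMk <|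
        ContinuousAt.comp (g := fun q : I × 𝔹 => shrink q.1 q.2) (continuousAt_shrink hr)
          (continuous_fst.fst.prodMk continuous_snd).continuousAt

theorem continuous_cone : Continuous fun q : (𝕊 ≃ₜ 𝕊) × 𝔹 => cone q.1 q.2 := by
  refine continuous_isotopy_of_continuousAt (τ := fun _ => 0)
    (F := fun φ : 𝕊 ≃ₜ 𝕊 => sphereExtend φ) continuous_const fun φ x hr => ?_
  have hx : (0 : ℝ) < ‖(x : E)‖ := (norm_nonneg _).lt_of_ne' (radius_zero x ▸ hr)
  -- `sphereExtend φ` is continuous only along the sphere, where `shrink 0` sends points near `x`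
  have hshrink : ContinuousAt (fun q : (𝕊 ≃ₜ 𝕊) × 𝔹 => (q.1, shrink 0 q.2)) (φ, x) :=
    continuousAt_fst.prodMk <| ContinuousAt.comp (g := fun q : I × 𝔹 => shrink q.1 q.2)
      (f := fun q : (𝕊 ≃ₜ 𝕊) × 𝔹 => ((0 : I), q.2)) (continuousAt_shrink hr)
      (continuous_const.prodMk continuous_snd).continuousAt
  have hopen : IsOpen {q : (𝕊 ≃ₜ 𝕊) × 𝔹 | (0 : ℝ) < ‖(q.2 : E)‖} :=
    isOpen_lt continuous_const (continuous_subtype_val.comp continuous_snd).norm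
  have hsphere : (fun q : (𝕊 ≃ₜ 𝕊) × 𝔹 => (q.1, shrink 0 q.2)) ⁻¹' (univ ×ˢ ∂𝔹) ∈ 𝓝 (φ, x) :=
    Filter.mem_of_superset (hopen.mem_nhds hx) fun q hq =>
      ⟨mem_univ _, shrink_mem_sphere (t := 0) hq⟩
  have hext : ContinuousWithinAt (fun q : (𝕊 ≃ₜ 𝕊) × 𝔹 => sphereExtend q.1 q.2) (univ ×ˢ ∂𝔹)
      (φ, shrink 0 x) :=
    continuousOn_sphereExtend _ ⟨mem_univ _, shrink_mem_sphere (t := 0) hx⟩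
  rw [← continuousWithinAt_univ]
  exact hext.comp_of_preimage_mem_nhdsWithin (f := fun q : (𝕊 ≃ₜ 𝕊) × 𝔹 => (q.1, shrink 0 q.2))
    hshrink.continuousWithinAt (by rwa [nhdsWithin_univ])

def coneHomeomorph (φ : 𝕊 ≃ₜ 𝕊) : 𝔹 ≃ₜ 𝔹 where
  toFun := cone φ
  invFun := cone φ.symm
  left_inv := leftInverse_cone φ.symm_apply_apply
  right_inv := leftInverse_cone φ.apply_symm_apply
  continuous_toFun := continuous_cone.comp (continuous_const.prodMk continuous_id)
  continuous_invFun := continuous_cone.comp (continuous_const.prodMk continuous_id)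

lemma image_coneHomeomorph (φ : 𝕊 ≃ₜ 𝕊) : coneHomeomorph φ '' ∂𝔹 = ∂𝔹 :=
  (mapsTo_cone φ).image_subset.antisymm fun y hy =>
    ⟨cone φ.symm y, mapsTo_cone _ hy, (coneHomeomorph φ).apply_symm_apply y⟩

def isotopyHomeomorph (t : I) (ψ : 𝔹 ≃ₜ 𝔹) (hψ : MapsTo ψ ∂𝔹 ∂𝔹)
    (hψ' : MapsTo ψ.symm ∂𝔹 ∂𝔹) : 𝔹 ≃ₜ 𝔹 where
  toFun := isotopy t ψ
  invFun := isotopy t ψ.symm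
  left_inv := leftInverse_isotopy hψ ψ.symm_apply_apply
  right_inv := leftInverse_isotopy hψ' ψ.apply_symm_apply
  continuous_toFun := continuous_isotopy.comp (continuous_const.prodMk continuous_id :
    Continuous fun x : 𝔹 => ((t, ψ), x))
  continuous_invFun := continuous_isotopy.comp (continuous_const.prodMk continuous_id :
    Continuous fun x : 𝔹 => ((t, ψ.symm), x))

end AlexanderTrick

section HomeoV

open AlexanderTrick

variable {V : Set E4}

lemma continuous_bres : Continuous (bres V) :=
  (continuous_homeomorph_of_continuous_uncurry <|
    (continuous_subtype_val.comp <| continuous_homeomorph_eval.comp <|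
      (continuous_subtype_val.comp continuous_fst).prodMk
        ((continuous_inclusion sphere_subset_closedBall).comp continuous_snd)).subtype_mk _
    ).subtype_mk _

def coneSection (hV : V ⊆ S3) (φ : HomeoVS V) : HomeoVD V :=
  ⟨coneHomeomorph φ.1,
    fun _ hv => Subtype.ext <|
      (cone_of_mem_sphere _ (hV hv)).trans (congrArg Subtype.val (φ.2 _ hv)),
    image_coneHomeomorph φ.1⟩

lemma continuous_coneSection (hV : V ⊆ S3) : Continuous (coneSection hV) :=
  (continuous_homeomorph_of_continuous_uncurry <|
    continuous_cone.comp ((continuous_subtype_val.comp continuous_fst).prodMk continuous_snd)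
    ).subtype_mk _

lemma bres_coneSection (hV : V ⊆ S3) (φ : HomeoVS V) : bres V (coneSection hV φ) = φ :=
  Subtype.ext <| Homeomorph.ext fun a => Subtype.ext <|
    cone_of_mem_sphere (x := ⟨a, sphere_subset_closedBall a.2⟩) φ.1 a.2

def alexanderHomotopy (hV : V ⊆ S3) (p : I × HomeoVD V) : HomeoVD V :=
  ⟨isotopyHomeomorph p.1 p.2.1 (fun _ hx => HomeoRestriction.mem_sphere_image p.2.2.2 hx)
      (fun _ hx => HomeoRestriction.mem_sphere_symm p.2.2.2 hx),
    fun v hv => (isotopy_of_mem_sphere _ _ (hV hv)).trans (p.2.2.1 v hv),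
    (image_congr fun _ hx => isotopy_of_mem_sphere _ _ hx).trans p.2.2.2⟩

lemma continuous_alexanderHomotopy (hV : V ⊆ S3) : Continuous (alexanderHomotopy hV) :=
  (continuous_homeomorph_of_continuous_uncurry <| continuous_isotopy.comp <|
    (continuous_fst.fst.prodMk (continuous_subtype_val.comp continuous_fst.snd)).prodMk
      continuous_snd).subtype_mk _

lemma alexanderHomotopy_zero (hV : V ⊆ S3) (Ψ : HomeoVD V) :
    alexanderHomotopy hV (0, Ψ) = coneSection hV (bres V Ψ) :=
  Subtype.ext <| Homeomorph.ext <| congrFun (isotopy_zero_eq_cone fun _ _ => rfl)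

lemma alexanderHomotopy_one (hV : V ⊆ S3) (Ψ : HomeoVD V) : alexanderHomotopy hV (1, Ψ) = Ψ :=
  Subtype.ext <| Homeomorph.ext <| congrFun (isotopy_one _)

end HomeoV

theorem conical_alexander_trick (V : Set E4) (hV : V ⊆ S3) :
    ∃ bd : C(HomeoVD V, HomeoVS V),
      (∀ Ψ : HomeoVD V, bd Ψ = bres V Ψ) ∧
      ∃ s : C(HomeoVS V, HomeoVD V),
        bd.comp s = ContinuousMap.id (HomeoVS V) ∧
        (s.comp bd).Homotopic (ContinuousMap.id (HomeoVD V)) :=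
  ⟨⟨bres V, continuous_bres⟩, fun _ => rfl, ⟨coneSection hV, continuous_coneSection hV⟩,
    ContinuousMap.ext (bres_coneSection hV),
    ⟨{ toFun := alexanderHomotopy hV
       continuous_toFun := continuous_alexanderHomotopy hV
       map_zero_left := alexanderHomotopy_zero hV
       map_one_left := alexanderHomotopy_one hV }⟩⟩
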